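/- arXiv:math/9804131 — 2 statements merged into one kernel-verified Lean document; each statement's English description precedes it below -/
import Mathlib

section
/- Assume q^{2l} = 1 where l ≥ 2 is the smallest positive integer with this property. Let c, x₀, c'₂ ∈ ℂ and x₋ ∈ ℂ with x₋ ≠ 0; set d² := c² − λ²c'₂. Let V = ℂ^l with basis v₀, …, v_{l−1}, indices taken modulo l, and define linear endomorphisms by: ρ_C v_p = c v_p; ρ₀ v_p = (q^{2p} x₀ − q^p [p] c) v_p; ρ₋ v_p = x₋ v_{p+1}; ρ₊ v_p = x₋⁻¹ λ⁻² ( −d² + (1+q⁻²) c (c−λx₀) q^{2p} − q⁻² (c−λx₀)² q^{4p} ) v_{p−1}. Then (ρ₀, ρ₊, ρ₋, ρ_C) is a representation of B on V, and moreover ρ₋ρ₊ + q⁻¹ρ_Cρ₀ + q⁻²ρ₀² = c'₂·id. -/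
/-!
Index the basis vector `v_p` by `t = q^{2p}`. Since `q^{2l} = 1`, the cyclic shift `p ↦ p + 1`,
wrap-around included, acts as `t ↦ q² t`, so every relation reduces to a scalar identity in `t`.
The eigenvalue `a(t)` of `ρ₀` satisfies `a(q² t) = q² a(t) - q c`, which gives the `ρ₀ρ₊` and
`ρ₀ρ₋` relations. The coefficient of `ρ₊` is chosen so that the eigenvalue `b(t)` of `ρ₋ρ₊`
satisfies `b + q⁻¹ c a + q⁻² a² = c'₂`; feeding the recursion for `a` into this identity yields
`b(q² t) - b(t) = (q + q⁻¹)(c - λ a) a`, the commutator relation for `ρ₊ρ₋ - ρ₋ρ₊`.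
-/

noncomputable section

namespace SL2q

def qNum (q : ℂ) (p : ℕ) : ℂ := (q ^ p - q⁻¹ ^ p) / (q - q⁻¹)

open Matrix

lemma val_fin_add_one {n : ℕ} [NeZero n] (i : Fin n) :
    ((i + 1 : Fin n) : ℕ) = ((i : ℕ) + 1) % n := by
  rw [Fin.val_add, Fin.val_one', Nat.add_mod_mod]

lemma pow_val_fin_add_one {M : Type*} [Monoid M] {x : M} {n : ℕ} [NeZero n] (hx : x ^ n = 1)
    (i : Fin n) : x ^ ((i + 1 : Fin n) : ℕ) = x * x ^ (i : ℕ) := by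
  rw [val_fin_add_one, ← pow_eq_pow_mod _ hx, pow_succ']

section Weights

variable {q : ℂ}

lemma sub_inv_ne_zero (hq : q ≠ 0) (hq2 : q ^ 2 ≠ 1) : q - q⁻¹ ≠ 0 := by
  rw [sub_ne_zero]
  intro h
  apply hq2
  rw [sq, ← mul_inv_cancel₀ hq, ← h]

lemma pow_mul_qNum (hq : q ≠ 0) (p : ℕ) :
    q ^ p * qNum q p = (q ^ (2 * p) - 1) / (q - q⁻¹) := by
  rw [qNum, ← mul_div_assoc, inv_pow, mul_sub, mul_inv_cancel₀ (pow_ne_zero p hq), ← pow_add,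
    two_mul]

/-- The eigenvalue of `ρ₀` on `v_p`, as a function of `t = q^{2p}`. -/
def weightZero (q c x0 t : ℂ) : ℂ := t * x0 - (t - 1) / (q - q⁻¹) * c

/-- The eigenvalue of `ρ₋ρ₊` on `v_p`, as a function of `t = q^{2p}`. -/
def weightMinusPlus (q c x0 c2 t : ℂ) : ℂ :=
  ((q - q⁻¹) ^ 2)⁻¹ *
    (-(c ^ 2 - (q - q⁻¹) ^ 2 * c2) + (1 + q⁻¹ ^ 2) * c * (c - (q - q⁻¹) * x0) * t
      - q⁻¹ ^ 2 * (c - (q - q⁻¹) * x0) ^ 2 * t ^ 2)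

variable (hq : q ≠ 0) (hq2 : q ^ 2 ≠ 1) (c x0 c2 t : ℂ)
include hq hq2

lemma weightZero_sq_mul :
    weightZero q c x0 (q ^ 2 * t) = q ^ 2 * weightZero q c x0 t - q * c := by
  have := sub_inv_ne_zero hq hq2
  simp only [weightZero]
  field_simp
  ring

lemma weightMinusPlus_add_casimir :
    weightMinusPlus q c x0 c2 t + q⁻¹ * (c * weightZero q c x0 t)
      + q⁻¹ ^ 2 * (weightZero q c x0 t * weightZero q c x0 t) = c2 := by
  have := sub_inv_ne_zero hq hq2
  simp only [weightMinusPlus, weightZero]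
  field_simp
  ring

lemma weightMinusPlus_sq_mul_sub :
    weightMinusPlus q c x0 c2 (q ^ 2 * t) - weightMinusPlus q c x0 c2 t
      = (q + q⁻¹) * ((c - (q - q⁻¹) * weightZero q c x0 t) * weightZero q c x0 t) := by
  linear_combination (norm := (field_simp; ring))
    weightMinusPlus_add_casimir hq hq2 c x0 c2 (q ^ 2 * t)
    - weightMinusPlus_add_casimir hq hq2 c x0 c2 t
    - (q⁻¹ * c + q⁻¹ ^ 2 * (weightZero q c x0 (q ^ 2 * t) + q ^ 2 * weightZero q c x0 t - q * c))
      * weightZero_sq_mul hq hq2 c x0 t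

end Weights

section CyclicShift

variable {G R : Type*} [AddGroup G] [One G] [DecidableEq G] [NonUnitalNonAssocSemiring R]

-- Column `j` is the image of `v_j`: `shiftPrev w` sends `v_j` to `w j • v_(j-1)` and
-- `shiftNext x` sends `v_j` to `x j • v_(j+1)`.
def shiftPrev (w : G → R) : Matrix G G R := of fun i j => if i + 1 = j then w j else 0

def shiftNext (x : G → R) : Matrix G G R := of fun i j => if i = j + 1 then x j else 0

@[simp]
lemma shiftPrev_apply (w : G → R) (i j : G) : shiftPrev w i j = if i + 1 = j then w j else 0 :=
  rfl

@[simp]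
lemma shiftNext_apply (x : G → R) (i j : G) : shiftNext x i j = if i = j + 1 then x j else 0 :=
  rfl

variable [Fintype G]

lemma shiftPrev_mul_shiftNext (w x : G → R) :
    shiftPrev w * shiftNext x = diagonal fun i => w (i + 1) * x i := by
  ext i k
  rw [mul_apply, Finset.sum_eq_single (i + 1) (fun j _ hj => by simp [Ne.symm hj]) (by simp)]
  by_cases h : i = k <;> simp [h]

lemma shiftNext_mul_shiftPrev (x w : G → R) :
    shiftNext x * shiftPrev w = diagonal fun i => x (i - 1) * w i := by
  ext i k
  rw [mul_apply, Finset.sum_eq_single (i - 1)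
    (fun j _ hj => by simp [← sub_eq_iff_eq_add, Ne.symm hj]) (by simp)]
  by_cases h : i = k <;> simp [h]

end CyclicShift

section PeriodicModule

variable {G : Type*} [AddGroup G] [One G] [DecidableEq G]

def rhoZero (q c x0 : ℂ) (t : G → ℂ) : Matrix G G ℂ :=
  diagonal fun p => weightZero q c x0 (t p)

def rhoMinus (xm : ℂ) : Matrix G G ℂ := shiftNext fun _ => xm

def rhoPlus (q c x0 c2 xm : ℂ) (t : G → ℂ) : Matrix G G ℂ :=
  shiftPrev fun p => xm⁻¹ * weightMinusPlus q c x0 c2 (t p)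

variable [Fintype G] {q : ℂ} (hq : q ≠ 0) (hq2 : q ^ 2 ≠ 1) (c x0 c2 : ℂ) {xm : ℂ}
  {t : G → ℂ}
include hq hq2

lemma rhoZero_rhoPlus (ht : ∀ i, t (i + 1) = q ^ 2 * t i) :
    q ^ 2 • (rhoZero q c x0 t * rhoPlus q c x0 c2 xm t)
        - rhoPlus q c x0 c2 xm t * rhoZero q c x0 t
      = q • (c • (1 : Matrix G G ℂ) * rhoPlus q c x0 c2 xm t) := by
  ext i j
  simp only [rhoZero, rhoPlus, Matrix.sub_apply, Matrix.smul_apply, diagonal_mul, mul_diagonal,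
    shiftPrev_apply, smul_mul, one_mul, smul_eq_mul]
  split_ifs with h
  · subst h
    rw [ht, weightZero_sq_mul hq hq2]
    ring
  · simp

lemma rhoZero_rhoMinus (ht : ∀ i, t (i + 1) = q ^ 2 * t i) :
    q⁻¹ ^ 2 • (rhoZero q c x0 t * rhoMinus xm) - rhoMinus xm * rhoZero q c x0 t
      = -(q⁻¹ • (c • (1 : Matrix G G ℂ) * rhoMinus xm)) := by
  ext i j
  simp only [rhoZero, rhoMinus, Matrix.sub_apply, Matrix.smul_apply, Matrix.neg_apply, diagonal_mul,
    mul_diagonal, shiftNext_apply, smul_mul, one_mul, smul_eq_mul]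
  split_ifs with h
  · subst h
    rw [ht, weightZero_sq_mul hq hq2]
    field_simp
    ring
  · simp

lemma rhoPlus_rhoMinus_commutator (hxm : xm ≠ 0) (ht : ∀ i, t (i + 1) = q ^ 2 * t i) :
    rhoPlus q c x0 c2 xm t * rhoMinus xm - rhoMinus xm * rhoPlus q c x0 c2 xm t
      = (q + q⁻¹) •
          ((c • (1 : Matrix G G ℂ) - (q - q⁻¹) • rhoZero q c x0 t) * rhoZero q c x0 t) := by
  rw [rhoPlus, rhoMinus, shiftPrev_mul_shiftNext, shiftNext_mul_shiftPrev, rhoZero]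
  ext i j
  by_cases h : i = j
  · subst h
    simp only [ht, Matrix.sub_apply, diagonal_apply_eq, Matrix.smul_apply, mul_diagonal,
      one_apply_eq, smul_eq_mul, mul_one]
    rw [mul_comm xm⁻¹, inv_mul_cancel_right₀ hxm, mul_inv_cancel_left₀ hxm]
    exact weightMinusPlus_sq_mul_sub hq hq2 c x0 c2 (t i)
  · simp [h]

lemma rhoMinus_rhoPlus_add_casimir (hxm : xm ≠ 0) :
    rhoMinus xm * rhoPlus q c x0 c2 xm t + q⁻¹ • (c • (1 : Matrix G G ℂ) * rhoZero q c x0 t)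
      + q⁻¹ ^ 2 • (rhoZero q c x0 t * rhoZero q c x0 t) = c2 • 1 := by
  rw [rhoPlus, rhoMinus, shiftNext_mul_shiftPrev, rhoZero]
  ext i j
  by_cases h : i = j
  · subst h
    simp only [Algebra.smul_mul_assoc, one_mul, inv_pow, diagonal_mul_diagonal, Matrix.add_apply,
      diagonal_apply_eq, Matrix.smul_apply, smul_eq_mul, one_apply_eq, mul_one]
    rw [mul_inv_cancel_left₀ hxm, ← inv_pow]
    exact weightMinusPlus_add_casimir hq hq2 c x0 c2 (t i)
  · simp [h]

end PeriodicModule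

theorem periodic_rep_general (q : ℂ) (hq : q ≠ 0) (hq2 : q ^ 2 ≠ 1)
    (l : ℕ) (hl : 2 ≤ l) (hq2l : q ^ (2 * l) = 1)
    (c x0 c2 xm : ℂ) (hxm : xm ≠ 0) :
    let d2 : ℂ := c ^ 2 - (q - q⁻¹) ^ 2 * c2
    let MC : Matrix (Fin l) (Fin l) ℂ := c • 1
    let M0 : Matrix (Fin l) (Fin l) ℂ :=
      Matrix.diagonal fun p => q ^ (2 * (p : ℕ)) * x0 - q ^ (p : ℕ) * qNum q (p : ℕ) * c
    let Mm : Matrix (Fin l) (Fin l) ℂ :=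
      Matrix.of fun i j => if (i : ℕ) = ((j : ℕ) + 1) % l then xm else 0
    let Mp : Matrix (Fin l) (Fin l) ℂ :=
      Matrix.of fun i j =>
        if ((i : ℕ) + 1) % l = (j : ℕ) then
          xm⁻¹ * ((q - q⁻¹) ^ 2)⁻¹ *
            (-d2 + (1 + q⁻¹ ^ 2) * c * (c - (q - q⁻¹) * x0) * q ^ (2 * (j : ℕ))
              - q⁻¹ ^ 2 * (c - (q - q⁻¹) * x0) ^ 2 * q ^ (4 * (j : ℕ)))
        else 0
    ((q ^ 2 : ℂ) • (M0 * Mp) - Mp * M0 = q • (MC * Mp)) ∧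
    ((q⁻¹ ^ 2 : ℂ) • (M0 * Mm) - Mm * M0 = -(q⁻¹ • (MC * Mm))) ∧
    (Mp * Mm - Mm * Mp = ((q + q⁻¹) : ℂ) • ((MC - (q - q⁻¹) • M0) * M0)) ∧
    (MC * M0 = M0 * MC) ∧ (MC * Mp = Mp * MC) ∧ (MC * Mm = Mm * MC) ∧
    (Mm * Mp + q⁻¹ • (MC * M0) + (q⁻¹ ^ 2 : ℂ) • (M0 * M0) = c2 • 1) := by
  intro d2 MC M0 Mm Mp
  have : NeZero l := ⟨by omega⟩
  set t : Fin l → ℂ := fun p => (q ^ 2) ^ (p : ℕ)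
  have ht (i : Fin l) : t (i + 1) = q ^ 2 * t i := pow_val_fin_add_one (by rwa [← pow_mul]) i
  have hM0 : M0 = rhoZero q c x0 t := by
    simp only [M0, rhoZero, t, weightZero, pow_mul_qNum hq, pow_mul]
  have hMm : Mm = rhoMinus xm := by
    ext i j
    simp only [Mm, rhoMinus, shiftNext_apply, of_apply, ← val_fin_add_one, Fin.val_inj]
  have hMp : Mp = rhoPlus q c x0 c2 xm t := by
    have h4 (n : ℕ) : q ^ (4 * n) = ((q ^ 2) ^ n) ^ 2 := by ring
    ext i j
    simp only [Mp, d2, rhoPlus, shiftPrev_apply, of_apply, ← val_fin_add_one, Fin.val_inj, t,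
      weightMinusPlus, mul_assoc, h4, pow_mul]
  have hMC (M : Matrix (Fin l) (Fin l) ℂ) : MC * M = M * MC :=
    ((Commute.one_left M).smul_left c).eq
  rw [hM0, hMm, hMp]
  exact ⟨rhoZero_rhoPlus hq hq2 c x0 c2 ht, rhoZero_rhoMinus hq hq2 c x0 ht,
    rhoPlus_rhoMinus_commutator hq hq2 c x0 c2 hxm ht, hMC _, hMC _, hMC _,
    rhoMinus_rhoPlus_add_casimir hq hq2 c x0 c2 hxm⟩

/-- the explicit l-dimensional (periodic) action with x₋ ≠ 0
(basis v₀,…,v_{l−1}, indices mod l):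
ρ_C v_p = c v_p, ρ₀ v_p = (q^{2p}x₀ − q^p[p]c) v_p, ρ₋ v_p = x₋ v_{p+1},
ρ₊ v_p = x₋⁻¹λ⁻²(−d² + (1+q⁻²)c(c−λx₀)q^{2p} − q⁻²(c−λx₀)²q^{4p}) v_{p−1}
defines a representation of B, on which C'₂ acts by the scalar c'₂. -/
theorem periodic_rep (q : ℂ) (hq : q ≠ 0) (hq2 : q ^ 2 ≠ 1)
    (l : ℕ) (hl : 2 ≤ l) (hq2l : q ^ (2 * l) = 1)
    (hmin : ∀ m : ℕ, 0 < m → m < l → q ^ (2 * m) ≠ 1)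
    (c x0 c2 xm : ℂ) (hxm : xm ≠ 0) :
    let d2 : ℂ := c ^ 2 - (q - q⁻¹) ^ 2 * c2
    let MC : Matrix (Fin l) (Fin l) ℂ := c • 1
    let M0 : Matrix (Fin l) (Fin l) ℂ :=
      Matrix.diagonal fun p => q ^ (2 * (p : ℕ)) * x0 - q ^ (p : ℕ) * qNum q (p : ℕ) * c
    let Mm : Matrix (Fin l) (Fin l) ℂ :=
      Matrix.of fun i j => if (i : ℕ) = ((j : ℕ) + 1) % l then xm else 0
    let Mp : Matrix (Fin l) (Fin l) ℂ :=
      Matrix.of fun i j =>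
        if ((i : ℕ) + 1) % l = (j : ℕ) then
          xm⁻¹ * ((q - q⁻¹) ^ 2)⁻¹ *
            (-d2 + (1 + q⁻¹ ^ 2) * c * (c - (q - q⁻¹) * x0) * q ^ (2 * (j : ℕ))
              - q⁻¹ ^ 2 * (c - (q - q⁻¹) * x0) ^ 2 * q ^ (4 * (j : ℕ)))
        else 0
    ((q ^ 2 : ℂ) • (M0 * Mp) - Mp * M0 = q • (MC * Mp)) ∧
    ((q⁻¹ ^ 2 : ℂ) • (M0 * Mm) - Mm * M0 = -(q⁻¹ • (MC * Mm))) ∧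
    (Mp * Mm - Mm * Mp = ((q + q⁻¹) : ℂ) • ((MC - (q - q⁻¹) • M0) * M0)) ∧
    (MC * M0 = M0 * MC) ∧ (MC * Mp = Mp * MC) ∧ (MC * Mm = Mm * MC) ∧
    (Mm * Mp + q⁻¹ • (MC * M0) + (q⁻¹ ^ 2 : ℂ) • (M0 * M0) = c2 • 1) :=
  periodic_rep_general q hq hq2 l hl hq2l c x0 c2 xm hxm

end SL2q
end
end

section
/- Assume q^{2l} = 1 where l ≥ 3 is the smallest positive integer with this property. Let c, ν ∈ ℂ with ν ≠ 0 and (q²+1)c − (q^{2p}+1)ν ≠ 0 for every p = 1, …, l−1. Let V = ℂ^l with basis v₀, …, v_{l−1} and define: ρ_C v_p = c v_p; ρ₀ v_p = λ⁻¹ (c − q^{2p} ν) v_p; ρ₋ v_p = v_{p+1} for p < l−1 and ρ₋ v_{l−1} = 0; ρ₊ v₀ = 0 and ρ₊ v_p = λ⁻¹ [p] q^{p−2} ν ( (q²+1)c − (q^{2p}+1)ν ) v_{p−1} for 1 ≤ p ≤ l−1. Then (ρ₀, ρ₊, ρ₋, ρ_C) is an irreducible l-dimensional representation of B. -/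
/-!
The operators ρ_C, ρ₀ are diagonal and ρ₋, ρ₊ are weighted shifts, so every defining relation of
B reduces to a scalar identity between the diagonal entries and the shift weights; in terms of
x = q^{2p} these are rational identities. The weight of ρ₊ vanishes at p = 0 and, because
[l] = 0, also at p = l, which is what makes ρ₊ρ₋ − ρ₋ρ₊ diagonal with the right corner entries.

For irreducibility: ρ₋ is nilpotent, so a nonzero invariant subspace contains a nonzero vector
killed by ρ₋, i.e. a multiple of v_{l−1}. The weights of ρ₊ at p = 1, …, l − 1 are nonzero
(minimality of l and the regularity assumption), so applying ρ₊ repeatedly yields every v_p.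
-/

noncomputable section

namespace SL2q

open Matrix

def lowering (R : Type*) [Zero R] [One R] (l : ℕ) : Matrix (Fin l) (Fin l) R :=
  of fun i j => if (i : ℕ) = (j : ℕ) + 1 then 1 else 0

def raising {R : Type*} [Zero R] (l : ℕ) (f : ℕ → R) : Matrix (Fin l) (Fin l) R :=
  of fun i j => if (i : ℕ) + 1 = (j : ℕ) then f j else 0

section Shifts

variable {R : Type*} [CommRing R] {l : ℕ}

theorem sum_ite_val_eq (n : ℕ) (g : Fin l → R) :
    ∑ k : Fin l, (if (k : ℕ) = n then g k else 0) = if h : n < l then g ⟨n, h⟩ else 0 := by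
  split_ifs with h
  · rw [Finset.sum_eq_single ⟨n, h⟩ (fun b _ hb => if_neg (fun hbn => hb (Fin.ext hbn)))
      (by simp)]
    simp
  · exact Finset.sum_eq_zero fun k _ => if_neg (by omega)

theorem smul_diagonal_mul_raising_sub {a b : R} {d : ℕ → R} (f : ℕ → R)
    (hd : ∀ n, a * d n - d (n + 1) = b) :
    a • (diagonal (fun i : Fin l => d i) * raising l f) -
        raising l f * diagonal (fun i : Fin l => d i) = b • raising l f := by
  ext i j
  simp only [Matrix.sub_apply, Matrix.smul_apply, diagonal_mul, mul_diagonal, raising, of_apply,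
    smul_eq_mul]
  split_ifs with h
  · rw [← h, ← hd]; ring
  · ring

theorem smul_diagonal_mul_lowering_sub {a b : R} {d : ℕ → R}
    (hd : ∀ n, a * d (n + 1) - d n = b) :
    a • (diagonal (fun i : Fin l => d i) * lowering R l) -
        lowering R l * diagonal (fun i : Fin l => d i) = b • lowering R l := by
  ext i j
  simp only [Matrix.sub_apply, Matrix.smul_apply, diagonal_mul, mul_diagonal, lowering, of_apply,
    smul_eq_mul]
  split_ifs with h
  · rw [h, ← hd]; ring
  · ring

theorem raising_mul_lowering {f : ℕ → R} (hf : f l = 0) :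
    raising l f * lowering R l = diagonal fun i : Fin l => f (i + 1) := by
  ext i j
  simp only [mul_apply, raising, lowering, of_apply, mul_ite, mul_one, mul_zero]
  simp_rw [eq_comm (a := (i : ℕ) + 1)]
  rw [sum_ite_val_eq, diagonal_apply]
  rcases eq_or_ne i j with rfl | hij
  · rcases Nat.lt_or_ge ((i : ℕ) + 1) l with h | h
    · simp [h]
    · simp [show (i : ℕ) + 1 = l by omega, hf]
  · simp [hij, hij.symm, Fin.val_inj]

theorem lowering_mul_raising {f : ℕ → R} (hf : f 0 = 0) :
    lowering R l * raising l f = diagonal fun i : Fin l => f i := by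
  ext i j
  simp only [mul_apply, raising, lowering, of_apply, ite_mul, zero_mul, one_mul]
  rcases hi : (i : ℕ) with _ | m
  · simp [diagonal_apply, hi, hf]
  · simp_rw [Nat.add_right_cancel_iff, eq_comm (a := m)]
    rw [sum_ite_val_eq, dif_pos (by omega), diagonal_apply]
    simp only [← hi, Fin.val_inj]
    split_ifs with h <;> simp [h]

theorem lowering_mulVec_apply (w : Fin l → R) {i j : Fin l} (h : (i : ℕ) = j + 1) :
    (lowering R l *ᵥ w) i = w j := by
  simp only [mulVec, dotProduct, lowering, of_apply, ite_mul, one_mul, zero_mul]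
  simp_rw [h, Nat.add_right_cancel_iff, eq_comm (a := (j : ℕ))]
  rw [sum_ite_val_eq, dif_pos j.2]

theorem raising_mulVec_single (f : ℕ → R) {i j : Fin l} (h : (i : ℕ) + 1 = j) :
    raising l f *ᵥ Pi.single j 1 = f j • Pi.single i 1 := by
  ext k
  simp [raising, Pi.single_apply, ← h, Fin.val_inj]

theorem lowering_pow_apply (k : ℕ) (i j : Fin l) :
    (lowering R l ^ k) i j = if (i : ℕ) = j + k then 1 else 0 := by
  induction k generalizing j with
  | zero => simp [one_apply, Fin.val_inj]
  | succ k ih =>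
    simp only [pow_succ, mul_apply, ih]
    simp only [lowering, of_apply, mul_ite, mul_one, mul_zero]
    rw [sum_ite_val_eq]
    dsimp only
    split_ifs <;> first | rfl | omega

theorem lowering_pow_self : lowering R l ^ l = 0 := by
  ext i j
  rw [lowering_pow_apply, if_neg (by omega), Matrix.zero_apply]

theorem eq_smul_single_last_of_lowering_mulVec_eq_zero {n : ℕ} {w : Fin (n + 1) → R}
    (h : lowering R (n + 1) *ᵥ w = 0) : w = w (Fin.last n) • Pi.single (Fin.last n) 1 := by
  ext i
  rcases Fin.eq_castSucc_or_eq_last i with ⟨j, rfl⟩ | rfl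
  · rw [← lowering_mulVec_apply w (i := j.succ) (by simp), h]
    simp [Fin.castSucc_ne_last]
  · simp

end Shifts

theorem exists_mem_ne_zero_mulVec_eq_zero {R n : Type*} [CommRing R] [Fintype n] [DecidableEq n]
    {A : Matrix n n R} {W : Submodule R (n → R)} (hW : ∀ v ∈ W, A *ᵥ v ∈ W) {m : ℕ}
    {v : n → R} (hv : v ∈ W) (hv0 : v ≠ 0) (hm : A ^ m *ᵥ v = 0) :
    ∃ w ∈ W, w ≠ 0 ∧ A *ᵥ w = 0 := by
  induction m generalizing v with
  | zero => exact absurd (by simpa using hm) hv0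
  | succ m ih =>
    by_cases hAv : A *ᵥ v = 0
    · exact ⟨v, hv, hv0, hAv⟩
    · exact ih (hW v hv) hAv (by rwa [mulVec_mulVec, ← pow_succ])

theorem eq_bot_or_eq_top_of_lowering_raising_invariant {K : Type*} [Field K] {l : ℕ}
    {f : ℕ → K} (hf : ∀ n, 1 ≤ n → n < l → f n ≠ 0) (W : Submodule K (Fin l → K))
    (hWm : ∀ v ∈ W, lowering K l *ᵥ v ∈ W) (hWp : ∀ v ∈ W, raising l f *ᵥ v ∈ W) :
    W = ⊥ ∨ W = ⊤ := by
  refine or_iff_not_imp_left.2 fun hW => ?_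
  obtain ⟨v, hv, hv0⟩ := Submodule.exists_mem_ne_zero_of_ne_bot hW
  obtain ⟨w, hw, hw0, hker⟩ := exists_mem_ne_zero_mulVec_eq_zero hWm hv hv0
    (by rw [lowering_pow_self, zero_mulVec])
  obtain ⟨n, rfl⟩ : ∃ n, l = n + 1 :=
    Nat.exists_eq_succ_of_ne_zero (by rintro rfl; exact hw0 (Subsingleton.elim _ _))
  have hlast : Pi.single (Fin.last n) 1 ∈ W := by
    rw [eq_smul_single_last_of_lowering_mulVec_eq_zero hker] at hw hw0
    exact (W.smul_mem_iff (left_ne_zero_of_smul hw0)).1 hw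
  have hsingle (i : Fin (n + 1)) : Pi.single i 1 ∈ W := by
    induction i using Fin.reverseInduction with
    | last => exact hlast
    | cast i hi =>
      have hraise := hWp _ hi
      rw [raising_mulVec_single f (i := i.castSucc) rfl] at hraise
      exact (W.smul_mem_iff (hf _ (by simp) i.succ.2)).1 hraise
  rw [eq_top_iff, ← (Pi.basisFun K (Fin (n + 1))).span_eq, Submodule.span_le]
  rintro _ ⟨i, rfl⟩
  simpa using hsingle i

def weight (q c ν : ℂ) (p : ℕ) : ℂ := (q - q⁻¹)⁻¹ * (c - q ^ (2 * p) * ν)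

def raisingCoeff (q c ν : ℂ) (p : ℕ) : ℂ :=
  (q - q⁻¹)⁻¹ * qNum q p * (q ^ p * q⁻¹ ^ 2) * ν *
    ((q ^ 2 + 1) * c - (q ^ (2 * p) + 1) * ν)

section Coefficients

variable {q : ℂ} (hq : q ≠ 0) (hq2 : q ^ 2 ≠ 1) (c ν : ℂ)
include hq hq2

theorem weight_eq (n : ℕ) : weight q c ν n = q * (c - q ^ (2 * n) * ν) / (q ^ 2 - 1) := by
  have : q ^ 2 - 1 ≠ 0 := sub_ne_zero.2 hq2
  rw [weight]
  field_simp

theorem raisingCoeff_eq (n : ℕ) :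
    raisingCoeff q c ν n =
      (q ^ (2 * n) - 1) * ν * ((q ^ 2 + 1) * c - (q ^ (2 * n) + 1) * ν) / (q ^ 2 - 1) ^ 2 := by
  have : q ^ 2 - 1 ≠ 0 := sub_ne_zero.2 hq2
  have hqn : q ^ n ≠ 0 := pow_ne_zero n hq
  rw [raisingCoeff, qNum, pow_mul', inv_pow]
  field_simp

theorem sq_mul_weight_sub_weight_succ (n : ℕ) :
    q ^ 2 * weight q c ν n - weight q c ν (n + 1) = q * c := by
  have : q ^ 2 - 1 ≠ 0 := sub_ne_zero.2 hq2
  rw [weight_eq hq hq2, weight_eq hq hq2, mul_add, pow_add]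
  field_simp
  ring

theorem inv_sq_mul_weight_succ_sub_weight (n : ℕ) :
    q⁻¹ ^ 2 * weight q c ν (n + 1) - weight q c ν n = -(q⁻¹ * c) := by
  have : q ^ 2 - 1 ≠ 0 := sub_ne_zero.2 hq2
  rw [weight_eq hq hq2, weight_eq hq hq2, mul_add, pow_add]
  field_simp
  ring

theorem raisingCoeff_succ_sub (n : ℕ) :
    raisingCoeff q c ν (n + 1) - raisingCoeff q c ν n =
      (q + q⁻¹) * ((c - (q - q⁻¹) * weight q c ν n) * weight q c ν n) := by
  have : q ^ 2 - 1 ≠ 0 := sub_ne_zero.2 hq2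
  rw [raisingCoeff_eq hq hq2, raisingCoeff_eq hq hq2, weight_eq hq hq2, mul_add, pow_add]
  field_simp
  ring

theorem raisingCoeff_eq_zero {n : ℕ} (hn : q ^ (2 * n) = 1) : raisingCoeff q c ν n = 0 := by
  rw [raisingCoeff_eq hq hq2, hn, sub_self, zero_mul, zero_mul, zero_div]

theorem raisingCoeff_ne_zero {n : ℕ} (hn : q ^ (2 * n) ≠ 1) (hν : ν ≠ 0)
    (hreg : (q ^ 2 + 1) * c - (q ^ (2 * n) + 1) * ν ≠ 0) : raisingCoeff q c ν n ≠ 0 := by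
  have : q ^ 2 - 1 ≠ 0 := sub_ne_zero.2 hq2
  rw [raisingCoeff_eq hq hq2]
  exact div_ne_zero (mul_ne_zero (mul_ne_zero (sub_ne_zero.2 hn) hν) hreg) (pow_ne_zero 2 this)

end Coefficients

/-- the explicit l-dimensional highest- and lowest-weight
representation (l ≥ 3 minimal with q^{2l} = 1, ν ≠ 0,
(q²+1)c − (q^{2p}+1)ν ≠ 0 for p = 1,…,l−1), basis v₀,…,v_{l−1}:
ρ_C v_p = c v_p, ρ₀ v_p = λ⁻¹(c − q^{2p}ν) v_p, ρ₋ v_p = v_{p+1} (ρ₋ v_{l−1} = 0),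
ρ₊ v₀ = 0, ρ₊ v_p = λ⁻¹[p]q^{p−2}ν((q²+1)c − (q^{2p}+1)ν) v_{p−1},
is an irreducible representation of B. -/
theorem hw_rep_dim_l (q : ℂ) (hq : q ≠ 0) (hq2 : q ^ 2 ≠ 1)
    (l : ℕ) (hl : 3 ≤ l) (hq2l : q ^ (2 * l) = 1)
    (hmin : ∀ m : ℕ, 0 < m → m < l → q ^ (2 * m) ≠ 1)
    (c ν : ℂ) (hν : ν ≠ 0)
    (hreg : ∀ p : ℕ, 1 ≤ p → p < l → (q ^ 2 + 1) * c - (q ^ (2 * p) + 1) * ν ≠ 0) :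
    let MC : Matrix (Fin l) (Fin l) ℂ := c • 1
    let M0 : Matrix (Fin l) (Fin l) ℂ :=
      Matrix.diagonal fun p => (q - q⁻¹)⁻¹ * (c - q ^ (2 * (p : ℕ)) * ν)
    let Mm : Matrix (Fin l) (Fin l) ℂ :=
      Matrix.of fun i j => if (i : ℕ) = (j : ℕ) + 1 then 1 else 0
    let Mp : Matrix (Fin l) (Fin l) ℂ :=
      Matrix.of fun i j =>
        if (i : ℕ) + 1 = (j : ℕ) then
          (q - q⁻¹)⁻¹ * qNum q (j : ℕ) * (q ^ (j : ℕ) * q⁻¹ ^ 2) * ν *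
            ((q ^ 2 + 1) * c - (q ^ (2 * (j : ℕ)) + 1) * ν)
        else 0
    (((q ^ 2 : ℂ) • (M0 * Mp) - Mp * M0 = q • (MC * Mp)) ∧
     ((q⁻¹ ^ 2 : ℂ) • (M0 * Mm) - Mm * M0 = -(q⁻¹ • (MC * Mm))) ∧
     (Mp * Mm - Mm * Mp = ((q + q⁻¹) : ℂ) • ((MC - (q - q⁻¹) • M0) * M0)) ∧
     (MC * M0 = M0 * MC) ∧ (MC * Mp = Mp * MC) ∧ (MC * Mm = Mm * MC)) ∧
    Nontrivial (Fin l → ℂ) ∧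
    (∀ W : Submodule ℂ (Fin l → ℂ),
      (∀ v ∈ W, M0.mulVec v ∈ W) → (∀ v ∈ W, Mp.mulVec v ∈ W) →
      (∀ v ∈ W, Mm.mulVec v ∈ W) → (∀ v ∈ W, MC.mulVec v ∈ W) →
      W = ⊥ ∨ W = ⊤) := by
  intro MC M0 Mm Mp
  have hMm : Mm = lowering ℂ l := rfl
  have hMp : Mp = raising l (raisingCoeff q c ν) := rfl
  have hM0 : M0 = diagonal fun p : Fin l => weight q c ν p := rfl
  have hMC : MC = diagonal fun _ => c := smul_one_eq_diagonal c
  have hMC_mul (A : Matrix (Fin l) (Fin l) ℂ) : MC * A = c • A := smul_one_mul c A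
  have hMC_comm (A : Matrix (Fin l) (Fin l) ℂ) : MC * A = A * MC :=
    ((Commute.one_left A).smul_left c).eq
  refine ⟨⟨?_, ?_, ?_, hMC_comm _, hMC_comm _, hMC_comm _⟩, ?_, fun W _ hWp hWm _ => ?_⟩
  · rw [hMC_mul, smul_smul, hM0, hMp]
    exact smul_diagonal_mul_raising_sub _ (sq_mul_weight_sub_weight_succ hq hq2 c ν)
  · rw [hMC_mul, smul_smul, ← neg_smul, hM0, hMm]
    exact smul_diagonal_mul_lowering_sub (inv_sq_mul_weight_succ_sub_weight hq hq2 c ν)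
  · rw [hMp, hMm, raising_mul_lowering (raisingCoeff_eq_zero hq hq2 c ν hq2l),
      lowering_mul_raising (raisingCoeff_eq_zero hq hq2 c ν (by rw [mul_zero, pow_zero])),
      hMC, hM0]
    simp only [← diagonal_smul, diagonal_sub, diagonal_mul_diagonal]
    exact congrArg diagonal (funext fun i => raisingCoeff_succ_sub hq hq2 c ν i)
  · have : Nonempty (Fin l) := ⟨⟨0, by omega⟩⟩
    infer_instance
  · exact eq_bot_or_eq_top_of_lowering_raising_invariant
      (fun n hn hnl => raisingCoeff_ne_zero hq hq2 c ν (hmin n hn hnl) hν (hreg n hn hnl))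
      W hWm hWp

end SL2q
end
end
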